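/- arXiv:2404.17746 — 3 statements merged into one kernel-verified Lean document; each statement's English description precedes it below -/
import Mathlib

section
/- For every fixed σ > 0 and γ > 0, the function μ ↦ R(μ) = (1/π)∫₀^π 1(E_{μ,σ}(θ) ≤ γ) dθ is continuous on the open interval (0, ∞). -/
open Classical MeasureTheory ProbabilityTheory

/-- `Φ`, the standard Gaussian cumulative distribution function. -/
noncomputable def Phi (x : ℝ) : ℝ := ((gaussianReal 0 1) (Set.Iic x)).toReal

/-- `E_{μ,σ}(θ)`: reducible error of the affine classifier `sign(sin(θ)x + cos(θ))` for the
antipodal equal-prior mixture of `N(−μ, σ²)` and `N(μ, σ²)`. -/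
noncomputable def redErr (μ σ θ : ℝ) : ℝ :=
  Phi (μ / σ) - (1 / 2) * Phi ((μ * Real.sin θ - Real.cos θ) / (σ * Real.sin θ))
    - (1 / 2) * Phi ((μ * Real.sin θ + Real.cos θ) / (σ * Real.sin θ))

/-- `R(μ) = (1/π) ∫₀^π 1(E_{μ,σ}(θ) ≤ γ) dθ`, the Rashomon ratio. -/
noncomputable def rashRatio (σ γ μ : ℝ) : ℝ :=
  (1 / Real.pi) * ∫ θ in (0 : ℝ)..Real.pi, (if redErr μ σ θ ≤ γ then (1 : ℝ) else 0)

/-!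
For `θ ∈ (0, π)` we have `E_{μ,σ}(θ) = Φ(μ/σ) - g(cot θ / σ) / 2` with
`g t = Φ(μ/σ - t) + Φ(μ/σ + t)`. The function `g` is even, and for `μ > 0` it is strictly
decreasing on `[0, ∞)`, its derivative `φ(μ/σ + t) - φ(μ/σ - t)` being negative there. Since `cot`
is injective on `(0, π)`, every level set of `θ ↦ E_{μ,σ}(θ)` is countable, hence null. So for
almost every `θ` the indicator `1(E_{μ,σ}(θ) ≤ γ)` is locally constant in `μ`, and dominated
convergence gives the continuity of `R`.
-/

open Set Filter Topology Interval

lemma Phi_eq_integral (x : ℝ) : Phi x = ∫ t in Iic x, gaussianPDFReal 0 1 t := by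
  rw [Phi, gaussianReal_apply_eq_integral 0 one_ne_zero, ENNReal.toReal_ofReal]
  exact setIntegral_nonneg measurableSet_Iic fun t _ => gaussianPDFReal_nonneg _ _ _

lemma Phi_eq_add_intervalIntegral (x : ℝ) :
    Phi x = Phi 0 + ∫ t in (0 : ℝ)..x, gaussianPDFReal 0 1 t := by
  rw [Phi_eq_integral, Phi_eq_integral, ← intervalIntegral.integral_Iic_sub_Iic
    (integrable_gaussianPDFReal 0 1).integrableOn (integrable_gaussianPDFReal 0 1).integrableOn]
  ring

lemma continuous_gaussianPDFReal (m : ℝ) (v : NNReal) : Continuous (gaussianPDFReal m v) := by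
  unfold gaussianPDFReal
  fun_prop

lemma hasDerivAt_Phi (x : ℝ) : HasDerivAt Phi (gaussianPDFReal 0 1 x) x := by
  rw [show Phi = fun x => Phi 0 + ∫ t in (0 : ℝ)..x, gaussianPDFReal 0 1 t from
    funext Phi_eq_add_intervalIntegral]
  exact (intervalIntegral.integral_hasDerivAt_right
    (integrable_gaussianPDFReal 0 1).intervalIntegrable
    ((continuous_gaussianPDFReal 0 1).stronglyMeasurableAtFilter _ _)
    (continuous_gaussianPDFReal 0 1).continuousAt).const_add _

@[fun_prop]
lemma continuous_Phi : Continuous Phi :=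
  continuous_iff_continuousAt.2 fun x => (hasDerivAt_Phi x).continuousAt

lemma gaussianPDFReal_lt_of_sq_lt {x y : ℝ} (h : y ^ 2 < x ^ 2) :
    gaussianPDFReal 0 1 x < gaussianPDFReal 0 1 y := by
  simp only [gaussianPDFReal, NNReal.coe_one, mul_one, sub_zero]
  gcongr

lemma strictAntiOn_Phi_sub_add_Phi_add {c : ℝ} (hc : 0 < c) :
    StrictAntiOn (fun t => Phi (c - t) + Phi (c + t)) (Ici 0) := by
  refine strictAntiOn_of_hasDerivWithinAt_neg (convex_Ici 0) (by fun_prop)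
    (f' := fun t => gaussianPDFReal 0 1 (c + t) - gaussianPDFReal 0 1 (c - t))
    (fun t _ => ?_) fun t ht => ?_
  · have h1 : HasDerivAt (fun t => Phi (c - t)) (gaussianPDFReal 0 1 (c - t) * -1) t :=
      (hasDerivAt_Phi _).comp t ((hasDerivAt_id t).const_sub c)
    have h2 : HasDerivAt (fun t => Phi (c + t)) (gaussianPDFReal 0 1 (c + t) * 1) t :=
      (hasDerivAt_Phi _).comp t ((hasDerivAt_id t).const_add c)
    rw [show gaussianPDFReal 0 1 (c + t) - gaussianPDFReal 0 1 (c - t)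
      = gaussianPDFReal 0 1 (c - t) * -1 + gaussianPDFReal 0 1 (c + t) * 1 by ring]
    exact (h1.add h2).hasDerivWithinAt
  · rw [interior_Ici, mem_Ioi] at ht
    have : (c - t) ^ 2 < (c + t) ^ 2 := by nlinarith
    linarith [gaussianPDFReal_lt_of_sq_lt this]

lemma Function.Even.countable_preimage_singleton_of_injOn {g : ℝ → ℝ} (hg : g.Even)
    (hinj : InjOn g (Ici 0)) (c : ℝ) : (g ⁻¹' {c}).Countable := by
  set S := g ⁻¹' {c} ∩ Ici 0
  have hS : S.Subsingleton := fun s hs t ht => hinj hs.2 ht.2 (hs.1.trans ht.1.symm)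
  refine (hS.countable.union (hS.countable.image Neg.neg)).mono fun t ht => ?_
  rcases le_total 0 t with h | h
  · exact Or.inl ⟨ht, h⟩
  · exact Or.inr ⟨-t, ⟨by simpa [mem_preimage, hg t] using ht, neg_nonneg.2 h⟩, neg_neg t⟩

lemma Real.injOn_cot : InjOn Real.cot (Ioo 0 Real.pi) := by
  intro a ha b hb hab
  have hsa : 0 < Real.sin a := Real.sin_pos_of_pos_of_lt_pi ha.1 ha.2
  have hsb : 0 < Real.sin b := Real.sin_pos_of_pos_of_lt_pi hb.1 hb.2
  rw [Real.cot_eq_cos_div_sin, Real.cot_eq_cos_div_sin,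
    div_eq_div_iff hsa.ne' hsb.ne'] at hab
  have hz : Real.sin (a - b) = 0 := by
    rw [Real.sin_sub]
    linear_combination -hab
  have := (Real.sin_eq_zero_iff_of_lt_of_lt (by linarith [ha.1, hb.2])
    (by linarith [ha.2, hb.1])).1 hz
  linarith

lemma redErr_eq_of_mem_Ioo (μ σ : ℝ) {θ : ℝ} (hθ : θ ∈ Ioo 0 Real.pi) :
    redErr μ σ θ = Phi (μ / σ)
      - (1 / 2) * (Phi (μ / σ - Real.cot θ / σ) + Phi (μ / σ + Real.cot θ / σ)) := by
  have hs : 0 < Real.sin θ := Real.sin_pos_of_pos_of_lt_pi hθ.1 hθ.2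
  rw [redErr, Real.cot_eq_cos_div_sin]
  field_simp
  ring

lemma countable_setOf_redErr_eq {μ σ : ℝ} (hμ : 0 < μ) (hσ : 0 < σ) (γ : ℝ) :
    {θ ∈ Ioo 0 Real.pi | redErr μ σ θ = γ}.Countable := by
  set g : ℝ → ℝ := fun t => Phi (μ / σ - t) + Phi (μ / σ + t)
  have hg : g.Even := fun t => by simp only [g, sub_neg_eq_add, ← sub_eq_add_neg, add_comm]
  have hlevel := hg.countable_preimage_singleton_of_injOn
    (strictAntiOn_Phi_sub_add_Phi_add (div_pos hμ hσ)).injOn (2 * (Phi (μ / σ) - γ))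
  have hinj : InjOn (fun θ => Real.cot θ / σ) (Ioo 0 Real.pi) := fun a ha b hb hab =>
    Real.injOn_cot ha hb ((div_left_inj' hσ.ne').1 hab)
  refine MapsTo.countable_of_injOn (fun θ hθ => ?_) (hinj.mono fun θ hθ => hθ.1) hlevel
  have := redErr_eq_of_mem_Ioo μ σ hθ.1
  simp only [mem_preimage, mem_singleton_iff, g]
  linarith [hθ.2]

lemma continuousAt_intervalIntegral_ite_le {X : Type*} [TopologicalSpace X]
    [FirstCountableTopology X] {f : X → ℝ → ℝ} {x₀ : X} {a b γ : ℝ} (hmeas : ∀ x, Measurable (f x))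
    (hcont : ∀ θ, ContinuousAt (fun x => f x θ) x₀)
    (hlevel : ∀ᵐ θ, θ ∈ Ι a b → f x₀ θ ≠ γ) :
    ContinuousAt (fun x => ∫ θ in a..b, if f x θ ≤ γ then (1 : ℝ) else 0) x₀ := by
  refine intervalIntegral.continuousAt_of_dominated_interval (bound := fun _ => 1)
    (Eventually.of_forall fun x => ?_) (Eventually.of_forall fun x => ae_of_all _ fun θ _ => ?_)
    intervalIntegrable_const ?_
  · exact (Measurable.ite (measurableSet_le (hmeas x) measurable_const) measurable_const
      measurable_const).aestronglyMeasurable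
  · split_ifs <;> simp
  · filter_upwards [hlevel] with θ hθ hmem
    rcases (hθ hmem).lt_or_gt with hlt | hgt
    · exact continuousAt_const.congr <|
        ((hcont θ).eventually_lt_const hlt).mono fun x hx => (if_pos hx.le).symm
    · exact continuousAt_const.congr <|
        ((hcont θ).eventually_const_lt hgt).mono fun x hx => (if_neg (not_le.2 hx)).symm

lemma ae_redErr_ne {μ σ : ℝ} (hμ : 0 < μ) (hσ : 0 < σ) (γ : ℝ) :
    ∀ᵐ θ, θ ∈ Ι 0 Real.pi → redErr μ σ θ ≠ γ := by
  have hnull : volume (insert Real.pi {θ ∈ Ioo 0 Real.pi | redErr μ σ θ = γ}) = 0 :=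
    ((countable_setOf_redErr_eq hμ hσ γ).insert _).measure_zero _
  filter_upwards [measure_eq_zero_iff_ae_notMem.1 hnull] with θ hθ hmem heq
  rw [uIoc_of_le Real.pi_pos.le] at hmem
  rcases hmem.2.eq_or_lt with hπ | hπ
  · exact hθ (.inl hπ)
  · exact hθ (.inr ⟨⟨hmem.1, hπ⟩, heq⟩)

theorem rashRatio_continuousOn_general
    (σ γ : ℝ) (hσ : 0 < σ) :
    ContinuousOn (fun μ => rashRatio σ γ μ) (Set.Ioi (0 : ℝ)) := by
  intro μ hμ
  refine (continuousAt_const.mul ?_).continuousWithinAt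
  exact continuousAt_intervalIntegral_ite_le (fun μ => by unfold redErr; fun_prop)
    (fun θ => by unfold redErr; fun_prop) (ae_redErr_ne hμ hσ γ)

/-- For fixed `σ > 0` and `γ > 0`, the Rashomon ratio `μ ↦ R(μ)` is
continuous on `(0, ∞)`. -/
theorem rashRatio_continuousOn
    (σ γ : ℝ) (hσ : 0 < σ) (hγ : 0 < γ) :
    ContinuousOn (fun μ => rashRatio σ γ μ) (Set.Ioi (0 : ℝ)) :=
  rashRatio_continuousOn_general σ γ hσ
end

section
/- For every fixed σ > 0 and γ > 0, the Rashomon ratio tends to one as the class means move apart: lim_{μ→∞} R(μ) = 1, where R(μ) = (1/π)∫₀^π 1(E_{μ,σ}(θ) ≤ γ) dθ. -/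
/-!
For fixed `θ ∈ (0, π)` all three arguments of `Φ` in `E_{μ,σ}(θ)` grow linearly in `μ`, so
`E_{μ,σ}(θ) → 1 - 1/2 - 1/2 = 0` and `θ` eventually lies in the Rashomon set. The integrand
`1(E_{μ,σ}(θ) ≤ γ)` is bounded by `1`, so dominated convergence gives `∫₀^π 1(E ≤ γ) dθ → π`.
-/

open Classical MeasureTheory ProbabilityTheory

open Filter Topology Real

lemma monotone_Phi : Monotone Phi := fun _ _ hxy =>
  ENNReal.toReal_mono (measure_ne_top _ _) (measure_mono (Set.Iic_subset_Iic.2 hxy))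

lemma tendsto_Phi_atTop : Tendsto Phi atTop (𝓝 1) := by
  unfold Phi
  have h := (ENNReal.tendsto_toReal (measure_ne_top _ _)).comp
    (tendsto_measure_Iic_atTop (gaussianReal 0 1))
  simpa [Function.comp_def] using h

lemma measurable_redErr (μ σ : ℝ) : Measurable fun θ => redErr μ σ θ := by
  have := monotone_Phi.measurable
  unfold redErr
  fun_prop

lemma tendsto_redErr_atTop {σ θ : ℝ} (hσ : 0 < σ) (hθ : 0 < sin θ) :
    Tendsto (fun μ => redErr μ σ θ) atTop (𝓝 0) := by
  have hscale : 0 < σ * sin θ := mul_pos hσ hθ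
  have hlin : Tendsto (fun μ : ℝ => μ * sin θ) atTop atTop := tendsto_id.atTop_mul_const hθ
  have h₀ : Tendsto (fun μ => Phi (μ / σ)) atTop (𝓝 1) :=
    tendsto_Phi_atTop.comp (tendsto_id.atTop_div_const hσ)
  have h_sub : Tendsto (fun μ => Phi ((μ * sin θ - cos θ) / (σ * sin θ))) atTop (𝓝 1) := by
    simp only [sub_eq_add_neg]
    exact tendsto_Phi_atTop.comp
      ((tendsto_atTop_add_const_right _ _ hlin).atTop_div_const hscale)
  have h_add : Tendsto (fun μ => Phi ((μ * sin θ + cos θ) / (σ * sin θ))) atTop (𝓝 1) :=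
    tendsto_Phi_atTop.comp ((tendsto_atTop_add_const_right _ _ hlin).atTop_div_const hscale)
  have h := (h₀.sub (h_sub.const_mul (1 / 2))).sub (h_add.const_mul (1 / 2))
  norm_num at h
  exact h

lemma tendsto_integral_redErr_le (σ γ : ℝ) (hσ : 0 < σ) (hγ : 0 < γ) :
    Tendsto (fun μ => ∫ θ in (0 : ℝ)..π, if redErr μ σ θ ≤ γ then (1 : ℝ) else 0)
      atTop (𝓝 π) := by
  have hlim : ∀ θ ∈ Set.Ioo 0 π,
      Tendsto (fun μ => if redErr μ σ θ ≤ γ then (1 : ℝ) else 0) atTop (𝓝 1) := by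
    intro θ hθ
    have hsmall : ∀ᶠ μ in atTop, redErr μ σ θ ≤ γ :=
      (tendsto_redErr_atTop hσ (sin_pos_of_mem_Ioo hθ)).eventually (eventually_le_nhds hγ)
    exact tendsto_const_nhds.congr' (hsmall.mono fun μ hμ => (if_pos hμ).symm)
  have h := intervalIntegral.tendsto_integral_filter_of_dominated_convergence (fun _ => 1)
    (F := fun μ θ => if redErr μ σ θ ≤ γ then (1 : ℝ) else 0)
    (Eventually.of_forall fun μ =>
      (Measurable.ite (measurableSet_le (measurable_redErr μ σ) measurable_const)
        measurable_const measurable_const).aestronglyMeasurable)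
    (Eventually.of_forall fun μ => ae_of_all _ fun θ _ => by split_ifs <;> norm_num)
    intervalIntegrable_const
    ((Measure.ae_ne volume π).mono fun θ hne hθ => by
      rw [Set.uIoc_of_le pi_pos.le] at hθ
      exact hlim θ ⟨hθ.1, lt_of_le_of_ne hθ.2 hne⟩)
  simpa using h

/-- For fixed `σ > 0` and `γ > 0`, the Rashomon ratio tends to `1` as the
class means move apart: `lim_{μ→∞} R(μ) = 1`. -/
theorem rashRatio_tendsto_one
    (σ γ : ℝ) (hσ : 0 < σ) (hγ : 0 < γ) :
    Filter.Tendsto (fun μ => rashRatio σ γ μ) Filter.atTop (nhds 1) := by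
  have h := (tendsto_integral_redErr_le σ γ hσ hγ).const_mul (1 / π)
  rwa [one_div_mul_cancel pi_ne_zero] at h
end

section
/- For every fixed μ > 0 and σ > 0, the function θ ↦ E_{μ,σ}(θ) is strictly decreasing on the interval (0, π/2) and strictly increasing on the interval (π/2, π), and E_{μ,σ}(π/2) = 0. -/
open Classical MeasureTheory ProbabilityTheory

namespace RedErrAux

noncomputable def g (x : ℝ) : ℝ := gaussianPDFReal 0 1 x

lemma g_cont : Continuous g := by
  unfold g gaussianPDFReal
  fun_prop

lemma g_strict {x y : ℝ} (h : x ^ 2 < y ^ 2) : g y < g x := by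
  unfold g gaussianPDFReal
  have hpos : (0 : ℝ) < (Real.sqrt (2 * Real.pi * (1 : NNReal)))⁻¹ := by
    rw [inv_pos]
    apply Real.sqrt_pos.mpr
    positivity
  apply mul_lt_mul_of_pos_left _ hpos
  apply Real.exp_lt_exp.mpr
  simp only [sub_zero, NNReal.coe_one]
  nlinarith

lemma Phi_eq (x : ℝ) : Phi x = ∫ t in Set.Iic x, g t := by
  unfold Phi
  rw [gaussianReal_apply_eq_integral 0 one_ne_zero,
    ENNReal.toReal_ofReal (MeasureTheory.integral_nonneg fun t => gaussianPDFReal_nonneg 0 1 t)]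
  rfl

lemma Phi_diff (x y : ℝ) : Phi y - Phi x = ∫ t in x..y, g t := by
  rw [Phi_eq, Phi_eq]
  exact intervalIntegral.integral_Iic_sub_Iic
    ((integrable_gaussianPDFReal 0 1).integrableOn) ((integrable_gaussianPDFReal 0 1).integrableOn)

lemma key {a b₁ b₂ : ℝ} (ha : 0 < a) (hb₁ : 0 ≤ b₁) (h : b₁ < b₂) :
    Phi (a + b₂) + Phi (a - b₂) < Phi (a + b₁) + Phi (a - b₁) := by
  have h1 : Phi (a + b₂) - Phi (a + b₁) = ∫ x in (b₁ - a)..(b₂ - a), g (x + 2 * a) := by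
    rw [intervalIntegral.integral_comp_add_right, Phi_diff]
    congr 1 <;> ring
  have h2 : Phi (a - b₁) - Phi (a - b₂) = ∫ x in (b₁ - a)..(b₂ - a), g (-x) := by
    rw [intervalIntegral.integral_comp_neg, Phi_diff]
    congr 1 <;> ring
  have hab : b₁ - a < b₂ - a := by linarith
  have hlt : (∫ x in (b₁ - a)..(b₂ - a), g (x + 2 * a)) < ∫ x in (b₁ - a)..(b₂ - a), g (-x) := by
    apply intervalIntegral.integral_lt_integral_of_continuousOn_of_le_of_exists_lt hab
    · exact (g_cont.comp (by fun_prop)).continuousOn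
    · exact (g_cont.comp (by fun_prop)).continuousOn
    · intro x hx
      refine (g_strict ?_).le
      have hx1 : b₁ - a < x := hx.1
      nlinarith
    · refine ⟨b₂ - a, Set.right_mem_Icc.mpr hab.le, g_strict ?_⟩
      nlinarith
  linarith

lemma cot_lt {θ₁ θ₂ : ℝ} (h1 : 0 < θ₁) (h : θ₁ < θ₂) (h2 : θ₂ < Real.pi) :
    Real.cos θ₂ / Real.sin θ₂ < Real.cos θ₁ / Real.sin θ₁ := by
  have e : ∀ θ : ℝ, Real.cos θ / Real.sin θ = Real.tan (Real.pi / 2 - θ) := by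
    intro θ
    rw [Real.tan_eq_sin_div_cos, Real.sin_pi_div_two_sub, Real.cos_pi_div_two_sub]
  rw [e θ₁, e θ₂]
  have hpi := Real.pi_pos
  exact Real.strictMonoOn_tan ⟨by linarith, by linarith⟩ ⟨by linarith, by linarith⟩ (by linarith)

lemma redErr_eq (μ σ θ : ℝ) (hσ : 0 < σ) (hs : 0 < Real.sin θ) :
    redErr μ σ θ = Phi (μ / σ) - (1 / 2) * Phi (μ / σ - (Real.cos θ / Real.sin θ) / σ)
      - (1 / 2) * Phi (μ / σ + (Real.cos θ / Real.sin θ) / σ) := by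
  have e1 : (μ * Real.sin θ - Real.cos θ) / (σ * Real.sin θ)
      = μ / σ - (Real.cos θ / Real.sin θ) / σ := by
    field_simp
  have e2 : (μ * Real.sin θ + Real.cos θ) / (σ * Real.sin θ)
      = μ / σ + (Real.cos θ / Real.sin θ) / σ := by
    field_simp
  rw [redErr, e1, e2]

end RedErrAux

/-- For fixed `μ > 0` and `σ > 0`, the reducible error `θ ↦ E_{μ,σ}(θ)` is
strictly decreasing on `(0, π/2)`, strictly increasing on `(π/2, π)`, and vanishes at
`θ = π/2`. -/
theorem redErr_monotonicity
    (μ σ : ℝ) (hμ : 0 < μ) (hσ : 0 < σ) :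
    StrictAntiOn (fun θ => redErr μ σ θ) (Set.Ioo 0 (Real.pi / 2)) ∧
    StrictMonoOn (fun θ => redErr μ σ θ) (Set.Ioo (Real.pi / 2) Real.pi) ∧
    redErr μ σ (Real.pi / 2) = 0 := by
  have hpi := Real.pi_pos
  have ha : 0 < μ / σ := div_pos hμ hσ
  refine ⟨?_, ?_, ?_⟩
  · intro θ₁ hθ₁ θ₂ hθ₂ hlt
    have hs1 : 0 < Real.sin θ₁ := Real.sin_pos_of_pos_of_lt_pi hθ₁.1 (by linarith [hθ₁.2])
    have hs2 : 0 < Real.sin θ₂ := Real.sin_pos_of_pos_of_lt_pi hθ₂.1 (by linarith [hθ₂.2])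
    have hc2pos : 0 < Real.cos θ₂ / Real.sin θ₂ := by
      apply div_pos _ hs2
      exact Real.cos_pos_of_mem_Ioo ⟨by linarith [hθ₂.1], hθ₂.2⟩
    have hcc : Real.cos θ₂ / Real.sin θ₂ < Real.cos θ₁ / Real.sin θ₁ :=
      RedErrAux.cot_lt hθ₁.1 hlt (by linarith [hθ₂.2])
    have hk := RedErrAux.key ha (b₁ := (Real.cos θ₂ / Real.sin θ₂) / σ)
      (b₂ := (Real.cos θ₁ / Real.sin θ₁) / σ) (le_of_lt (div_pos hc2pos hσ))
      (by exact div_lt_div_of_pos_right hcc hσ)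
    simp only [RedErrAux.redErr_eq μ σ θ₁ hσ hs1, RedErrAux.redErr_eq μ σ θ₂ hσ hs2]
    linarith
  · intro θ₁ hθ₁ θ₂ hθ₂ hlt
    have hs1 : 0 < Real.sin θ₁ := Real.sin_pos_of_pos_of_lt_pi (by linarith [hθ₁.1]) hθ₁.2
    have hs2 : 0 < Real.sin θ₂ := Real.sin_pos_of_pos_of_lt_pi (by linarith [hθ₂.1]) hθ₂.2
    have hc1neg : Real.cos θ₁ / Real.sin θ₁ < 0 := by
      apply div_neg_of_neg_of_pos _ hs1
      exact Real.cos_neg_of_pi_div_two_lt_of_lt hθ₁.1 (by linarith [hθ₁.2])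
    have hcc : Real.cos θ₂ / Real.sin θ₂ < Real.cos θ₁ / Real.sin θ₁ :=
      RedErrAux.cot_lt (by linarith [hθ₁.1]) hlt hθ₂.2
    set c₁ := Real.cos θ₁ / Real.sin θ₁ with hc₁
    set c₂ := Real.cos θ₂ / Real.sin θ₂ with hc₂
    have hk := RedErrAux.key ha (b₁ := -(c₁ / σ)) (b₂ := -(c₂ / σ))
      (le_of_lt (neg_pos.mpr (div_neg_of_neg_of_pos hc1neg hσ)))
      (by have := div_lt_div_of_pos_right hcc hσ; linarith)
    simp only [RedErrAux.redErr_eq μ σ θ₁ hσ hs1, RedErrAux.redErr_eq μ σ θ₂ hσ hs2, ← hc₁, ← hc₂]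
    have e1 : μ / σ - c₁ / σ = μ / σ + -(c₁ / σ) := by ring
    have e2 : μ / σ + c₁ / σ = μ / σ - -(c₁ / σ) := by ring
    have e3 : μ / σ - c₂ / σ = μ / σ + -(c₂ / σ) := by ring
    have e4 : μ / σ + c₂ / σ = μ / σ - -(c₂ / σ) := by ring
    rw [e1, e2, e3, e4]
    linarith
  · rw [redErr, Real.sin_pi_div_two, Real.cos_pi_div_two]
    norm_num
    ring
end
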